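/- Let k' ≥ 2, let S be an 𝔽_q-subspace of 𝔽_{q^n} with dim_{𝔽_q}(S) = k', let μ ∈ 𝔽_{q^n} ∖ 𝔽_q, let T = ⟨1, μ⟩_{𝔽_q}, let U = S × T, and let j = dim_{𝔽_q}(S ∩ μS). Then |L_U| = q^{k'+1} + q^{k'} − q^{j+1} + 1. Moreover: (i) if j = k', then S is an 𝔽_q(μ)-subspace and L_U = L_W where W = S × 𝔽_q(μ) is the 𝔽_q(μ)-span of U, and every point of L_U has weight greater than one; (ii) L_U has a point of weight one if and only if j ≤ k'−1; and (iii) |L_U| = q^{k'+1} + 1 if and only if j = k'−1. -/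

import Mathlib

/-!
A point of `L_{S × T}` other than `⟨(0, 1)⟩` is `⟨(1, m)⟩` for a slope `m`, i.e. an `m` with
`mS ∩ T ≠ 0`, and its weight is `w(m) = dim (S ∩ m⁻¹T)`. Counting the pairs
`(s, t) ∈ (S ∖ 0) × (T ∖ 0)` by their ratio `t / s` gives
`(q^{k'} - 1)(q^{dim T} - 1) = ∑ (q^{w(m)} - 1)` over the nonzero slopes `m`.
For `T = ⟨1, μ⟩` a nonzero slope has weight two exactly when `m⁻¹T ⊆ S`, i.e. when
`μ / m ∈ S ∩ μS`, so there are `q^j - 1` of them and all other nonzero slopes have weight one;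
solving for the number of weight-one slopes gives `|L_U|`.
If `j = k'` then `μS = S`, so `S` is closed under multiplication by `𝔽_q(μ)` and, being finite,
also under division by its nonzero elements; then every slope has weight two.
-/

open Submodule

/-- The span `⟨1, μ, …, μ^{m-1}⟩_{F_q}`. -/
noncomputable def pows (Fq : Type*) {Fqn : Type*} [Field Fq] [Field Fqn] [Algebra Fq Fqn]
    (μ : Fqn) (m : ℕ) : Submodule Fq Fqn :=
  Submodule.span Fq (Set.range fun i : Fin m => μ ^ (i : ℕ))

/-- Multiplication of a subspace by a scalar: `b · W`. -/
noncomputable def bmul (Fq : Type*) {Fqn : Type*} [Field Fq] [Field Fqn] [Algebra Fq Fqn]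
    (b : Fqn) (W : Submodule Fq Fqn) : Submodule Fq Fqn :=
  W.map (LinearMap.mulLeft Fq b)

/-- The `F_q`-linear set in `PG(1, q^n)` defined by an `F_q`-subspace `U` of `F_{q^n}²`:
the set of projective points `⟨v⟩_{F_{q^n}}`, `v ∈ U \ {0}`, viewed as
one-dimensional `F_{q^n}`-subspaces of `F_{q^n}²`. -/
def linSet {Fq Fqn : Type*} [Field Fq] [Field Fqn] [Algebra Fq Fqn]
    (U : Submodule Fq (Fqn × Fqn)) : Set (Submodule Fqn (Fqn × Fqn)) :=
  {P | ∃ v : Fqn × Fqn, v ≠ 0 ∧ v ∈ U ∧ P = Submodule.span Fqn {v}}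

/-- The weight of a projective point `P` in the linear set defined by `U`:
`w_{L_U}(P) = dim_{F_q}(U ∩ P)`. -/
noncomputable def weight {Fq Fqn : Type*} [Field Fq] [Field Fqn] [Algebra Fq Fqn]
    (U : Submodule Fq (Fqn × Fqn)) (P : Submodule Fqn (Fqn × Fqn)) : ℕ :=
  Module.finrank Fq ↥(U ⊓ P.restrictScalars Fq)

open LinearMap Module

section Points

variable {K L : Type*} [Field K] [Field L] [Algebra K L] (S T : Submodule K L)

def slopeSpace (m : L) : Submodule K L := S ⊓ T.comap (mulLeft K m)

def slopes : Set L := {m | slopeSpace S T m ≠ ⊥}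

variable {S T}

theorem mem_slopeSpace {m s : L} : s ∈ slopeSpace S T m ↔ s ∈ S ∧ m * s ∈ T := Iff.rfl

theorem mem_slopes {m : L} : m ∈ slopes S T ↔ ∃ s ∈ S, s ≠ 0 ∧ m * s ∈ T := by
  simp only [slopes, Set.mem_ofPred_eq, Submodule.ne_bot_iff, mem_slopeSpace, and_assoc]
  exact ⟨fun ⟨s, hs, h, h0⟩ => ⟨s, hs, h0, h⟩, fun ⟨s, hs, h0, h⟩ => ⟨s, hs, h, h0⟩⟩

theorem span_singleton_eq_span_one_div {x y : L} (hx : x ≠ 0) :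
    span L {(x, y)} = span L {((1 : L), y / x)} := by
  rw [← span_singleton_smul_eq (isUnit_iff_ne_zero.mpr hx) ((1 : L), y / x)]
  simp [mul_div_cancel₀ _ hx]

theorem span_singleton_zero_eq {y : L} (hy : y ≠ 0) :
    span L {((0 : L), y)} = span L {((0 : L), (1 : L))} := by
  rw [← span_singleton_smul_eq (isUnit_iff_ne_zero.mpr hy) ((0 : L), (1 : L))]
  simp

theorem linSet_prod (hT : T ≠ ⊥) :
    linSet (S.prod T) =
      insert (span L {((0 : L), (1 : L))}) ((fun m => span L {((1 : L), m)}) '' slopes S T) := by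
  ext P
  simp only [linSet, Set.mem_ofPred_eq, Set.mem_insert_iff, Set.mem_image, mem_slopes]
  constructor
  · rintro ⟨⟨x, y⟩, hxy, ⟨hx, hy⟩, rfl⟩
    by_cases hx0 : x = 0
    · subst hx0
      exact .inl (span_singleton_zero_eq (by simpa using hxy))
    · refine .inr ⟨y / x, ⟨x, hx, hx0, by rwa [div_mul_cancel₀ _ hx0]⟩, ?_⟩
      exact (span_singleton_eq_span_one_div hx0).symm
  · rintro (rfl | ⟨m, ⟨s, hs, hs0, hms⟩, rfl⟩)
    · obtain ⟨t, ht, ht0⟩ := Submodule.ne_bot_iff _ |>.mp hT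
      exact ⟨(0, t), by simp [ht0], ⟨S.zero_mem, ht⟩, (span_singleton_zero_eq ht0).symm⟩
    · refine ⟨(s, m * s), by simp [hs0], ⟨hs, hms⟩, ?_⟩
      rw [span_singleton_eq_span_one_div hs0, mul_div_cancel_right₀ _ hs0]

theorem weight_prod_span_one (m : L) :
    weight (S.prod T) (span L {((1 : L), m)}) = finrank K (slopeSpace S T m) := by
  let graph : L →ₗ[K] L × L := LinearMap.id.prod (mulLeft K m)
  have hgraph : Function.Injective graph := fun a b h => congrArg Prod.fst h
  have : S.prod T ⊓ (span L {((1 : L), m)}).restrictScalars K = (slopeSpace S T m).map graph := by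
    ext ⟨x, y⟩
    simp only [Submodule.mem_inf, Submodule.mem_prod, restrictScalars_mem,
      mem_span_singleton, Submodule.mem_map, mem_slopeSpace, Prod.smul_mk, smul_eq_mul,
      mul_one, Prod.ext_iff, graph, LinearMap.prod_apply, id_coe]
    constructor
    · rintro ⟨⟨hx, hy⟩, c, rfl, rfl⟩
      exact ⟨c, ⟨hx, by rwa [mul_comm]⟩, rfl, mul_comm _ _⟩
    · rintro ⟨s, ⟨hs, hms⟩, rfl, rfl⟩
      exact ⟨⟨hs, hms⟩, s, rfl, mul_comm _ _⟩
  rw [weight, this, (equivMapOfInjective graph hgraph _).finrank_eq]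

theorem weight_prod_span_zero_one :
    weight (S.prod T) (span L {((0 : L), (1 : L))}) = finrank K T := by
  have : S.prod T ⊓ (span L {((0 : L), (1 : L))}).restrictScalars K = T.map (inr K L L) := by
    ext ⟨x, y⟩
    simp only [Submodule.mem_inf, Submodule.mem_prod, restrictScalars_mem,
      mem_span_singleton, Submodule.mem_map, Prod.smul_mk, smul_eq_mul, mul_one, mul_zero,
      Prod.ext_iff, inr_apply]
    constructor
    · rintro ⟨⟨-, hy⟩, c, rfl, rfl⟩
      exact ⟨c, hy, rfl, rfl⟩
    · rintro ⟨t, ht, rfl, rfl⟩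
      exact ⟨⟨S.zero_mem, ht⟩, t, rfl, rfl⟩
  rw [weight, this, (equivMapOfInjective (inr K L L) inr_injective T).finrank_eq]

theorem ncard_linSet_prod (hT : T ≠ ⊥) (hfin : (slopes S T).Finite) :
    (linSet (S.prod T)).ncard = (slopes S T).ncard + 1 := by
  have hinj : Function.Injective fun m : L => span L {((1 : L), m)} := by
    intro a b (h : span L {((1 : L), a)} = span L {((1 : L), b)})
    obtain ⟨c, hc⟩ := mem_span_singleton.mp (h ▸ mem_span_singleton_self ((1 : L), a))
    simp only [Prod.smul_mk, smul_eq_mul, mul_one, Prod.ext_iff] at hc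
    rw [← hc.2, hc.1, one_mul]
  have hnot : span L {((0 : L), (1 : L))} ∉ (fun m => span L {((1 : L), m)}) '' slopes S T := by
    rintro ⟨m, -, h : span L {((1 : L), m)} = span L {((0 : L), (1 : L))}⟩
    obtain ⟨c, hc⟩ := mem_span_singleton.mp (h ▸ mem_span_singleton_self ((1 : L), m))
    simp [Prod.ext_iff] at hc
  rw [linSet_prod hT, Set.ncard_insert_of_notMem hnot (hfin.image _),
    Set.ncard_image_of_injective _ hinj]

end Points

section Fibres

variable {K L : Type*} [Field K] [Field L] [Algebra K L] {S T : Submodule K L}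

theorem image_div_nonzero_prod :
    (fun p : L × L => p.2 / p.1) '' (((S : Set L) \ {0}) ×ˢ ((T : Set L) \ {0})) =
      slopes S T \ {0} := by
  ext m
  simp only [Set.mem_image, Set.mem_prod, Set.mem_sdiff, SetLike.mem_coe, Set.mem_singleton_iff,
    mem_slopes, Prod.exists]
  constructor
  · rintro ⟨s, t, ⟨⟨hs, hs0⟩, ht, ht0⟩, rfl⟩
    exact ⟨⟨s, hs, hs0, by rwa [div_mul_cancel₀ _ hs0]⟩, div_ne_zero ht0 hs0⟩
  · rintro ⟨⟨s, hs, hs0, hms⟩, hm0⟩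
    exact ⟨s, m * s, ⟨⟨hs, hs0⟩, hms, mul_ne_zero hm0 hs0⟩, mul_div_cancel_right₀ _ hs0⟩

theorem nonzero_prod_inter_div_preimage {m : L} (hm : m ≠ 0) :
    ((S : Set L) \ {0}) ×ˢ ((T : Set L) \ {0}) ∩ (fun p : L × L => p.2 / p.1) ⁻¹' {m} =
      (fun s => (s, m * s)) '' ((slopeSpace S T m : Set L) \ {0}) := by
  ext ⟨s, t⟩
  simp only [Set.mem_inter_iff, Set.mem_prod, Set.mem_sdiff, SetLike.mem_coe,
    Set.mem_singleton_iff, Set.mem_preimage, Set.mem_image, mem_slopeSpace, Prod.ext_iff]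
  constructor
  · rintro ⟨⟨⟨hs, hs0⟩, ht, -⟩, rfl⟩
    exact ⟨s, ⟨⟨hs, by rwa [div_mul_cancel₀ _ hs0]⟩, hs0⟩, rfl, div_mul_cancel₀ _ hs0⟩
  · rintro ⟨s, ⟨⟨hs, hms⟩, hs0⟩, rfl, rfl⟩
    exact ⟨⟨⟨hs, hs0⟩, hms, mul_ne_zero hm hs0⟩, mul_div_cancel_right₀ _ hs0⟩

theorem finite_slopes_sdiff_zero (hS : (S : Set L).Finite) (hT : (T : Set L).Finite) :
    (slopes S T \ {0}).Finite :=
  image_div_nonzero_prod (S := S) (T := T) ▸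
    ((hS.sdiff (t := {0})).prod (hT.sdiff (t := {0}))).image _

theorem ncard_mul_ncard_eq_sum_slopes (hS : (S : Set L).Finite) (hT : (T : Set L).Finite) :
    ((S : Set L) \ {0}).ncard * ((T : Set L) \ {0}).ncard =
      ∑ m ∈ (finite_slopes_sdiff_zero hS hT).toFinset,
        ((slopeSpace S T m : Set L) \ {0}).ncard := by
  classical
  set ratio : L × L → L := fun p => p.2 / p.1
  have hA := (hS.sdiff (t := {0})).prod (hT.sdiff (t := {0}))
  rw [← Set.ncard_prod, Set.ncard_eq_toFinset_card _ hA,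
    Finset.card_eq_sum_card_fiberwise (f := ratio)]
  · refine Finset.sum_congr rfl fun m hm => ?_
    have hm0 : m ≠ 0 := ((Set.Finite.mem_toFinset _).mp hm).2
    rw [← Set.ncard_coe_finset, Finset.coe_filter]
    simp only [Set.Finite.mem_toFinset]
    change (_ ∩ ratio ⁻¹' {m}).ncard = _
    rw [nonzero_prod_inter_div_preimage hm0,
      Set.ncard_image_of_injective _ fun a b h => congrArg Prod.fst h]
  · intro p hp
    rw [Set.Finite.coe_toFinset] at hp ⊢
    exact image_div_nonzero_prod (S := S) (T := T) ▸ Set.mem_image_of_mem ratio hp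

end Fibres

theorem ncard_sdiff_zero_add_one {K M : Type*} [Field K] [Fintype K] [AddCommGroup M] [Module K M]
    (V : Submodule K M) [FiniteDimensional K V] :
    ((V : Set M) \ {0}).ncard + 1 = Fintype.card K ^ finrank K V := by
  have : Finite V := Module.finite_of_finite K
  have : Fintype V := Fintype.ofFinite V
  rw [Set.ncard_sdiff_singleton_add_one V.zero_mem (Set.toFinite _), ← Nat.card_coe_set_eq,
    Nat.card_eq_fintype_card]
  exact Module.card_eq_pow_finrank

theorem finite_coe_submodule {K M : Type*} [Field K] [Finite K] [AddCommGroup M] [Module K M]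
    (V : Submodule K M) [FiniteDimensional K V] : (V : Set M).Finite :=
  have : Finite V := Module.finite_of_finite K
  Set.toFinite _

section Multiplication

variable {K L : Type*} [Field K] [Field L] [Algebra K L]

theorem mem_bmul_iff {b x : L} (hb : b ≠ 0) {W : Submodule K L} :
    x ∈ bmul K b W ↔ b⁻¹ * x ∈ W := by
  refine ⟨?_, fun h => ⟨b⁻¹ * x, h, mul_inv_cancel_left₀ hb x⟩⟩
  rintro ⟨w, hw, rfl⟩
  rwa [mulLeft_apply, inv_mul_cancel_left₀ hb]

theorem finrank_bmul {b : L} (hb : b ≠ 0) (W : Submodule K L) :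
    finrank K (bmul K b W) = finrank K W :=
  (equivMapOfInjective _ (mul_right_injective₀ hb) W).finrank_eq.symm

instance {b : L} (W : Submodule K L) [FiniteDimensional K W] :
    FiniteDimensional K (bmul K b W) := by
  unfold bmul
  infer_instance

variable {S T : Submodule K L} {m : L}

theorem slopeSpace_eq_inf_bmul (hm : m ≠ 0) : slopeSpace S T m = S ⊓ bmul K m⁻¹ T := by
  ext x
  rw [mem_slopeSpace, Submodule.mem_inf, mem_bmul_iff (inv_ne_zero hm), inv_inv]

theorem finrank_slopeSpace_le (hm : m ≠ 0) [FiniteDimensional K T] :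
    finrank K (slopeSpace S T m) ≤ finrank K T := by
  rw [slopeSpace_eq_inf_bmul hm, ← finrank_bmul (inv_ne_zero hm) T]
  exact Submodule.finrank_mono inf_le_right

theorem finrank_slopeSpace_eq_iff (hm : m ≠ 0) [FiniteDimensional K T] :
    finrank K (slopeSpace S T m) = finrank K T ↔ bmul K m⁻¹ T ≤ S := by
  rw [slopeSpace_eq_inf_bmul hm, ← finrank_bmul (inv_ne_zero hm) T, ← inf_eq_right]
  exact ⟨Submodule.eq_of_le_of_finrank_eq inf_le_right, fun h => by rw [h]⟩

theorem slopeSpace_zero : slopeSpace S T 0 = S := by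
  ext s
  simp [mem_slopeSpace]

instance [FiniteDimensional K S] : FiniteDimensional K (slopeSpace S T m) :=
  Submodule.finiteDimensional_inf_left _ _

theorem finrank_slopeSpace_pos_iff [FiniteDimensional K S] :
    0 < finrank K (slopeSpace S T m) ↔ m ∈ slopes S T := by
  rw [Nat.pos_iff_ne_zero, Ne, Submodule.finrank_eq_zero]
  rfl

end Multiplication

section Pair

variable {K L : Type*} [Field K] [Field L] [Algebra K L] {μ : L}

theorem ne_zero_of_notMem_range_algebraMap (hμ : μ ∉ Set.range (algebraMap K L)) : μ ≠ 0 := by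
  rintro rfl
  exact hμ ⟨0, map_zero _⟩

theorem pows_two_eq_span_pair : pows K μ 2 = span K {1, μ} := by
  rw [pows]
  congr 1
  ext x
  simp [Fin.exists_fin_two, eq_comm]

theorem one_mem_pows_two : (1 : L) ∈ pows K μ 2 := by
  rw [pows_two_eq_span_pair]
  exact subset_span (Set.mem_insert 1 {μ})

theorem pows_two_ne_bot : pows K μ 2 ≠ ⊥ :=
  (Submodule.ne_bot_iff _).mpr ⟨1, one_mem_pows_two, one_ne_zero⟩

theorem pows_two_le_adjoin : pows K μ 2 ≤ Subalgebra.toSubmodule (Algebra.adjoin K {μ}) := by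
  rw [pows_two_eq_span_pair, span_le, Set.insert_subset_iff, Set.singleton_subset_iff]
  exact ⟨Subalgebra.one_mem _, Algebra.self_mem_adjoin_singleton K μ⟩

instance : FiniteDimensional K (pows K μ 2) :=
  FiniteDimensional.span_of_finite K (Set.finite_range _)

theorem finrank_pows_two (hμ : μ ∉ Set.range (algebraMap K L)) : finrank K (pows K μ 2) = 2 := by
  have hfamily : (fun i : Fin 2 => μ ^ (i : ℕ)) = ![1, μ] := by
    ext i
    fin_cases i <;> simp
  have hindep : LinearIndependent K ![(1 : L), μ] := by
    rw [LinearIndependent.pair_iff' one_ne_zero]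
    rintro a rfl
    exact hμ ⟨a, Algebra.algebraMap_eq_smul_one a⟩
  rw [pows, hfamily, finrank_span_eq_card hindep, Fintype.card_fin]

theorem bmul_pows_two_le_iff {b : L} {S : Submodule K L} :
    bmul K b (pows K μ 2) ≤ S ↔ b ∈ S ∧ b * μ ∈ S := by
  rw [pows_two_eq_span_pair, bmul, Submodule.map_span, span_le, Set.image_pair]
  simp [Set.insert_subset_iff]

variable {S : Submodule K L} {m : L}

theorem finrank_slopeSpace_pows_two_eq_two_iff (hμ : μ ∉ Set.range (algebraMap K L))
    (hm : m ≠ 0) : finrank K (slopeSpace S (pows K μ 2) m) = 2 ↔ m⁻¹ ∈ S ∧ μ * m⁻¹ ∈ S := by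
  have h := finrank_slopeSpace_eq_iff (S := S) (T := pows K μ 2) hm
  rwa [finrank_pows_two hμ, bmul_pows_two_le_iff, mul_comm m⁻¹ μ] at h

theorem setOf_finrank_slopeSpace_pows_two_eq_two (hμ : μ ∉ Set.range (algebraMap K L)) :
    {m : L | m ≠ 0 ∧ finrank K (slopeSpace S (pows K μ 2) m) = 2} =
      (fun x => μ * x⁻¹) '' ((S ⊓ bmul K μ S : Submodule K L) \ {0}) := by
  have hμ0 := ne_zero_of_notMem_range_algebraMap hμ
  ext m
  simp only [Set.mem_ofPred_eq, Set.mem_image, Set.mem_sdiff, SetLike.mem_coe,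
    Submodule.mem_inf, mem_bmul_iff hμ0, Set.mem_singleton_iff]
  constructor
  · rintro ⟨hm, hw⟩
    obtain ⟨hm', hμm'⟩ := (finrank_slopeSpace_pows_two_eq_two_iff hμ hm).mp hw
    refine ⟨μ * m⁻¹, ⟨⟨hμm', by rwa [inv_mul_cancel_left₀ hμ0]⟩, ?_⟩, ?_⟩
    · exact mul_ne_zero hμ0 (inv_ne_zero hm)
    · rw [mul_inv, inv_inv, mul_inv_cancel_left₀ hμ0]
  · rintro ⟨x, ⟨⟨hx, hμx⟩, hx0⟩, rfl⟩
    have hm : μ * x⁻¹ ≠ 0 := mul_ne_zero hμ0 (inv_ne_zero hx0)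
    refine ⟨hm, (finrank_slopeSpace_pows_two_eq_two_iff hμ hm).mpr ⟨?_, ?_⟩⟩
    · rwa [mul_inv, inv_inv]
    · rwa [mul_inv, inv_inv, mul_inv_cancel_left₀ hμ0]

end Pair

section Count

variable {K L : Type*} [Field K] [Field L] [Algebra K L] {μ : L}
  {S : Submodule K L} [FiniteDimensional K S]

theorem slopes_sdiff_zero_inter_setOf_finrank_eq (T : Submodule K L) {d : ℕ} (hd : d ≠ 0) :
    (slopes S T \ {0}) ∩ {m | finrank K (slopeSpace S T m) = d} =
      {m | m ≠ 0 ∧ finrank K (slopeSpace S T m) = d} := by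
  ext m
  simp only [Set.mem_inter_iff, Set.mem_sdiff, Set.mem_singleton_iff, Set.mem_ofPred_eq,
    ← finrank_slopeSpace_pos_iff]
  exact ⟨fun ⟨⟨_, hm⟩, hw⟩ => ⟨hm, hw⟩, fun ⟨hm, hw⟩ => ⟨⟨by omega, hm⟩, hw⟩⟩

theorem slopes_pows_two_sdiff_zero_sdiff (hμ : μ ∉ Set.range (algebraMap K L)) :
    (slopes S (pows K μ 2) \ {0}) \ {m | finrank K (slopeSpace S (pows K μ 2) m) = 2} =
      {m | m ≠ 0 ∧ finrank K (slopeSpace S (pows K μ 2) m) = 1} := by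
  ext m
  simp only [Set.mem_sdiff, Set.mem_singleton_iff, Set.mem_ofPred_eq,
    ← finrank_slopeSpace_pos_iff]
  constructor
  · rintro ⟨⟨hpos, hm⟩, hw⟩
    have := (finrank_slopeSpace_le (S := S) hm).trans_eq (finrank_pows_two hμ)
    exact ⟨hm, by omega⟩
  · rintro ⟨hm, hw⟩
    exact ⟨⟨by omega, hm⟩, by omega⟩

variable [Fintype K]

theorem ncard_setOf_finrank_slopeSpace_pows_two_eq_two_add_one
    (hμ : μ ∉ Set.range (algebraMap K L)) :
    {m : L | m ≠ 0 ∧ finrank K (slopeSpace S (pows K μ 2) m) = 2}.ncard + 1 =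
      Fintype.card K ^ finrank K (S ⊓ bmul K μ S : Submodule K L) := by
  have hμ0 := ne_zero_of_notMem_range_algebraMap hμ
  have hinj : Function.Injective fun x : L => μ * x⁻¹ := fun a b h =>
    inv_injective (mul_left_cancel₀ hμ0 h)
  rw [setOf_finrank_slopeSpace_pows_two_eq_two hμ, Set.ncard_image_of_injective _ hinj,
    ncard_sdiff_zero_add_one]

theorem ncard_slopes_pows_two (hμ : μ ∉ Set.range (algebraMap K L)) (hS : S ≠ ⊥) :
    (slopes S (pows K μ 2)).ncard =
      Fintype.card K ^ finrank K (S ⊓ bmul K μ S : Submodule K L) +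
        {m : L | m ≠ 0 ∧ finrank K (slopeSpace S (pows K μ 2) m) = 1}.ncard := by
  have hfin := finite_slopes_sdiff_zero (finite_coe_submodule S) (finite_coe_submodule (pows K μ 2))
  have h0 : (0 : L) ∈ slopes S (pows K μ 2) := by
    obtain ⟨s, hs, hs0⟩ := (Submodule.ne_bot_iff S).mp hS
    exact mem_slopes.mpr ⟨s, hs, hs0, by rw [zero_mul]; exact zero_mem _⟩
  rw [← Set.insert_eq_of_mem h0, ← Set.insert_sdiff_singleton, Set.ncard_insert_of_notMem
    (fun h => h.2 rfl) hfin, ← Set.ncard_inter_add_ncard_sdiff_eq_ncard _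
    {m | finrank K (slopeSpace S (pows K μ 2) m) = 2} hfin,
    slopes_sdiff_zero_inter_setOf_finrank_eq _ two_ne_zero, slopes_pows_two_sdiff_zero_sdiff hμ,
    ← ncard_setOf_finrank_slopeSpace_pows_two_eq_two_add_one hμ]
  ring

theorem ncard_mul_ncard_pows_two (hμ : μ ∉ Set.range (algebraMap K L)) :
    ((S : Set L) \ {0}).ncard * (((pows K μ 2 : Submodule K L) : Set L) \ {0}).ncard =
      {m : L | m ≠ 0 ∧ finrank K (slopeSpace S (pows K μ 2) m) = 2}.ncard *
          (((pows K μ 2 : Submodule K L) : Set L) \ {0}).ncard +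
        {m : L | m ≠ 0 ∧ finrank K (slopeSpace S (pows K μ 2) m) = 1}.ncard *
          (Fintype.card K - 1) := by
  classical
  have hfin := finite_slopes_sdiff_zero (finite_coe_submodule S)
    (finite_coe_submodule (pows K μ 2))
  have hcoe (p : L → Prop) [DecidablePred p] :
      ((hfin.toFinset.filter p : Finset L) : Set L) =
        (slopes S (pows K μ 2) \ {0}) ∩ {m | p m} := by
    ext
    simp
  have hcoe_not (p : L → Prop) [DecidablePred p] :
      ((hfin.toFinset.filter (¬ p ·) : Finset L) : Set L) =
        (slopes S (pows K μ 2) \ {0}) \ {m | p m} := by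
    ext
    simp
  have hfibre {m : L} (hm : m ∈ hfin.toFinset) :
      ((slopeSpace S (pows K μ 2) m : Set L) \ {0}).ncard + 1 =
        Fintype.card K ^ finrank K (slopeSpace S (pows K μ 2) m) ∧
      0 < finrank K (slopeSpace S (pows K μ 2) m) ∧
        finrank K (slopeSpace S (pows K μ 2) m) ≤ 2 := by
    rw [Set.Finite.mem_toFinset] at hm
    exact ⟨ncard_sdiff_zero_add_one _, finrank_slopeSpace_pos_iff.mpr hm.1,
      (finrank_slopeSpace_le hm.2).trans_eq (finrank_pows_two hμ)⟩
  rw [ncard_mul_ncard_eq_sum_slopes (finite_coe_submodule S) (finite_coe_submodule _),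
    ← Finset.sum_filter_add_sum_filter_not _ fun m => finrank K (slopeSpace S (pows K μ 2) m) = 2,
    Finset.sum_congr rfl (g := fun _ => (((pows K μ 2 : Submodule K L) : Set L) \ {0}).ncard),
    Finset.sum_const, Finset.sum_congr rfl (g := fun _ => Fintype.card K - 1), Finset.sum_const,
    smul_eq_mul, smul_eq_mul, ← Set.ncard_coe_finset, ← Set.ncard_coe_finset, hcoe, hcoe_not,
    slopes_sdiff_zero_inter_setOf_finrank_eq _ two_ne_zero, slopes_pows_two_sdiff_zero_sdiff hμ]
  · intro m hm
    obtain ⟨hm, hw⟩ := Finset.mem_filter.mp hm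
    obtain ⟨h1, hpos, hle⟩ := hfibre hm
    rw [show finrank K (slopeSpace S (pows K μ 2) m) = 1 by omega, pow_one] at h1
    omega
  · intro m hm
    obtain ⟨hm, hw⟩ := Finset.mem_filter.mp hm
    obtain ⟨h1, -⟩ := hfibre hm
    have hT := ncard_sdiff_zero_add_one (pows K μ 2)
    rw [hw] at h1
    rw [finrank_pows_two hμ] at hT
    omega

theorem ncard_setOf_finrank_slopeSpace_pows_two_eq_one (hμ : μ ∉ Set.range (algebraMap K L)) :
    ({m : L | m ≠ 0 ∧ finrank K (slopeSpace S (pows K μ 2) m) = 1}.ncard : ℤ) =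
      (Fintype.card K ^ finrank K S - Fintype.card K ^ finrank K (S ⊓ bmul K μ S : Submodule K L)) *
        (Fintype.card K + 1) := by
  have key := ncard_mul_ncard_pows_two (S := S) hμ
  have hS := ncard_sdiff_zero_add_one S
  have hT := ncard_sdiff_zero_add_one (pows K μ 2)
  have h2 := ncard_setOf_finrank_slopeSpace_pows_two_eq_two_add_one (S := S) hμ
  rw [finrank_pows_two hμ] at hT
  generalize ((S : Set L) \ {0}).ncard = sS at key hS
  generalize (((pows K μ 2 : Submodule K L) : Set L) \ {0}).ncard = sT at key hT
  generalize {m : L | m ≠ 0 ∧ finrank K (slopeSpace S (pows K μ 2) m) = 2}.ncard = n2 at key h2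
  generalize {m : L | m ≠ 0 ∧ finrank K (slopeSpace S (pows K μ 2) m) = 1}.ncard = n1 at key ⊢
  have hq : 1 < Fintype.card K := Fintype.one_lt_card
  zify [hq.le] at key hS hT h2
  have hq1 : (Fintype.card K : ℤ) - 1 ≠ 0 := sub_ne_zero.mpr (by exact_mod_cast hq.ne')
  refine mul_left_cancel₀ hq1 ?_
  linear_combination (-1 : ℤ) * key + (sT : ℤ) * hS - (sT : ℤ) * h2 +
    ((Fintype.card K : ℤ) ^ finrank K S - (Fintype.card K : ℤ) ^ finrank K (S ⊓ bmul K μ S :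
      Submodule K L)) * hT

end Count

section Stable

variable {K L : Type*} [Field K] [Field L] [Algebra K L] {S : Submodule K L} {μ : L}

theorem mul_mem_of_finrank_inf_bmul_eq [FiniteDimensional K S] (hμ : μ ≠ 0)
    (h : finrank K (S ⊓ bmul K μ S : Submodule K L) = finrank K S) {s : L} (hs : s ∈ S) :
    μ * s ∈ S := by
  have hle : S ≤ bmul K μ S := inf_eq_left.mp (Submodule.eq_of_le_of_finrank_eq inf_le_left h)
  have heq : S = bmul K μ S := Submodule.eq_of_le_of_finrank_eq hle (finrank_bmul hμ S).symm
  exact heq ▸ ⟨s, hs, rfl⟩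

theorem mul_mem_of_mem_adjoin (hμS : ∀ s ∈ S, μ * s ∈ S) {α : L}
    (hα : α ∈ Algebra.adjoin K {μ}) {s : L} (hs : s ∈ S) : α * s ∈ S := by
  induction hα using Algebra.adjoin_induction generalizing s with
  | mem x hx => exact (Set.mem_singleton_iff.mp hx) ▸ hμS s hs
  | algebraMap r => exact (Algebra.smul_def r s) ▸ S.smul_mem r hs
  | add x y _ _ hx hy => exact (add_mul x y s) ▸ S.add_mem (hx hs) (hy hs)
  | mul x y _ _ hx hy => exact (mul_assoc x y s).symm ▸ hx (hy hs)

theorem inv_mul_mem_of_mul_mem [FiniteDimensional K S] {a : L} (ha : a ≠ 0)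
    (haS : ∀ s ∈ S, a * s ∈ S) {s : L} (hs : s ∈ S) : a⁻¹ * s ∈ S := by
  have hinj : Function.Injective ((mulLeft K a).restrict haS) := fun x y hxy =>
    Subtype.ext (mul_left_cancel₀ ha (congrArg Subtype.val hxy))
  obtain ⟨x, hx⟩ := LinearMap.injective_iff_surjective.mp hinj ⟨s, hs⟩
  have hxs : a * x = s := congrArg Subtype.val hx
  rw [← hxs, inv_mul_cancel_left₀ ha]
  exact x.2

theorem linSet_prod_eq_of_le {T T' : Submodule K L} (hTT' : T ≤ T') (h1 : (1 : L) ∈ T)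
    (hinv : ∀ t ∈ T', t ≠ 0 → ∀ s ∈ S, t⁻¹ * s ∈ S) :
    linSet (S.prod T) = linSet (S.prod T') := by
  ext P
  constructor
  · rintro ⟨v, hv0, ⟨hv₁, hv₂⟩, rfl⟩
    exact ⟨v, hv0, ⟨hv₁, hTT' hv₂⟩, rfl⟩
  · rintro ⟨⟨x, t⟩, hv0, ⟨hx, ht⟩, rfl⟩
    by_cases ht0 : t = 0
    · subst ht0
      exact ⟨(x, 0), hv0, ⟨hx, T.zero_mem⟩, rfl⟩
    · refine ⟨(t⁻¹ * x, 1), by simp, ⟨hinv t ht ht0 x hx, h1⟩, ?_⟩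
      rw [← span_singleton_smul_eq (isUnit_iff_ne_zero.mpr ht0) (t⁻¹ * x, (1 : L))]
      simp [mul_inv_cancel_left₀ ht0]

end Stable

section LinearSet

variable {K L : Type*} [Field K] [Field L] [Algebra K L] {μ : L} {S : Submodule K L}
  [FiniteDimensional K S]

theorem one_lt_weight_prod_pows_two (hμ : μ ∉ Set.range (algebraMap K L))
    (hS : 2 ≤ finrank K S) (hμS : ∀ s ∈ S, μ * s ∈ S) :
    ∀ P ∈ linSet (S.prod (pows K μ 2)), 1 < weight (S.prod (pows K μ 2)) P := by
  intro P hP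
  rw [linSet_prod pows_two_ne_bot] at hP
  rcases hP with rfl | ⟨m, hm, rfl⟩
  · rw [weight_prod_span_zero_one, finrank_pows_two hμ]
    norm_num
  rw [weight_prod_span_one]
  by_cases hm0 : m = 0
  · rw [hm0, slopeSpace_zero]
    omega
  obtain ⟨s, hs, hs0, hms⟩ := mem_slopes.mp hm
  have hminv : m⁻¹ ∈ S := by
    have := inv_mul_mem_of_mul_mem (mul_ne_zero hm0 hs0)
      (fun s' hs' => mul_mem_of_mem_adjoin hμS (pows_two_le_adjoin hms) hs') hs
    rwa [mul_inv, mul_assoc, inv_mul_cancel₀ hs0, mul_one] at this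
  rw [(finrank_slopeSpace_pows_two_eq_two_iff hμ hm0).mpr ⟨hminv, hμS _ hminv⟩]
  norm_num

variable [Fintype K]

theorem ncard_linSet_prod_pows_two_add (hμ : μ ∉ Set.range (algebraMap K L)) (hS : S ≠ ⊥) :
    (linSet (S.prod (pows K μ 2))).ncard +
        Fintype.card K ^ (finrank K (S ⊓ bmul K μ S : Submodule K L) + 1) =
      Fintype.card K ^ (finrank K S + 1) + Fintype.card K ^ finrank K S + 1 := by
  have hfin := (finite_slopes_sdiff_zero (finite_coe_submodule S)
    (finite_coe_submodule (pows K μ 2))).of_sdiff (Set.finite_singleton 0)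
  have hN1 := ncard_setOf_finrank_slopeSpace_pows_two_eq_one (S := S) hμ
  rw [ncard_linSet_prod pows_two_ne_bot hfin, ncard_slopes_pows_two hμ hS]
  generalize {m : L | m ≠ 0 ∧ finrank K (slopeSpace S (pows K μ 2) m) = 1}.ncard = n1 at hN1 ⊢
  zify
  rw [hN1]
  ring

theorem exists_weight_prod_pows_two_eq_one (hμ : μ ∉ Set.range (algebraMap K L))
    (h : finrank K (S ⊓ bmul K μ S : Submodule K L) < finrank K S) :
    ∃ P ∈ linSet (S.prod (pows K μ 2)), weight (S.prod (pows K μ 2)) P = 1 := by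
  have hpos : 0 < ({m : L | m ≠ 0 ∧ finrank K (slopeSpace S (pows K μ 2) m) = 1}.ncard : ℤ) := by
    rw [ncard_setOf_finrank_slopeSpace_pows_two_eq_one hμ]
    have hlt : (Fintype.card K : ℤ) ^ finrank K (S ⊓ bmul K μ S : Submodule K L) <
        Fintype.card K ^ finrank K S := by
      exact_mod_cast Nat.pow_lt_pow_right Fintype.one_lt_card h
    exact mul_pos (sub_pos.mpr hlt) (by positivity)
  obtain ⟨m, -, hw⟩ := Set.nonempty_of_ncard_ne_zero (by exact_mod_cast hpos.ne')
  refine ⟨span L {((1 : L), m)}, ?_, by rw [weight_prod_span_one, hw]⟩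
  rw [linSet_prod pows_two_ne_bot]
  exact .inr ⟨m, finrank_slopeSpace_pos_iff.mp (by omega), rfl⟩

end LinearSet

theorem stmt6_general (Fq Fqn : Type*) [Field Fq] [Field Fqn] [Algebra Fq Fqn] [Fintype Fq]
    (q : ℕ) (hq : Fintype.card Fq = q)
    (k' : ℕ) (hk' : 2 ≤ k')
    (S : Submodule Fq Fqn) (hS : Module.finrank Fq ↥S = k')
    (μ : Fqn) (hμ : μ ∉ Set.range (algebraMap Fq Fqn))
    (T : Submodule Fq Fqn) (hT : T = pows Fq μ 2)
    (U : Submodule Fq (Fqn × Fqn)) (hU : U = S.prod T)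
    (j : ℕ) (hj : j = Module.finrank Fq ↥(S ⊓ bmul Fq μ S)) :
    Set.ncard (linSet U) + q ^ (j + 1) = q ^ (k' + 1) + q ^ k' + 1 ∧
    (j = k' →
      (∀ α ∈ Algebra.adjoin Fq {μ}, ∀ s ∈ S, α * s ∈ S) ∧
      linSet U = linSet (S.prod (Subalgebra.toSubmodule (Algebra.adjoin Fq {μ}))) ∧
      ∀ P ∈ linSet U, 1 < weight U P) ∧
    ((∃ P ∈ linSet U, weight U P = 1) ↔ j + 1 ≤ k') ∧
    (Set.ncard (linSet U) = q ^ (k' + 1) + 1 ↔ j + 1 = k') := by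
  subst hq hT hU hS hj
  have : FiniteDimensional Fq S := .of_finrank_pos (by omega)
  have hSbot : S ≠ ⊥ := fun h => by rw [h, finrank_bot] at hk'; omega
  have hjk : finrank Fq (S ⊓ bmul Fq μ S : Submodule Fq Fqn) ≤ finrank Fq S :=
    Submodule.finrank_mono inf_le_left
  have hμS (h : finrank Fq (S ⊓ bmul Fq μ S : Submodule Fq Fqn) = finrank Fq S) :
      ∀ s ∈ S, μ * s ∈ S := fun _ =>
    mul_mem_of_finrank_inf_bmul_eq (ne_zero_of_notMem_range_algebraMap hμ) h
  have hcount := ncard_linSet_prod_pows_two_add hμ hSbot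
  refine ⟨hcount, fun h => ⟨fun α hα _ => mul_mem_of_mem_adjoin (hμS h) hα, ?_,
    one_lt_weight_prod_pows_two hμ hk' (hμS h)⟩,
    ⟨?_, fun h => exists_weight_prod_pows_two_eq_one hμ (by omega)⟩, ?_⟩
  · exact linSet_prod_eq_of_le pows_two_le_adjoin one_mem_pows_two fun t ht ht0 _ =>
      inv_mul_mem_of_mul_mem ht0 fun _ => mul_mem_of_mem_adjoin (hμS h) ht
  · rintro ⟨P, hP, hw⟩
    by_contra hlt
    have := one_lt_weight_prod_pows_two hμ hk' (hμS (by omega)) P hP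
    omega
  · rw [← (Nat.pow_right_injective (Fintype.one_lt_card (α := Fq))).eq_iff (a := _ + 1)]
    omega

/-- With `S` of dimension `k' ≥ 2`, `μ ∉ F_q`, `T = ⟨1, μ⟩_{F_q}`,
`U = S × T` and `j = dim_{F_q}(S ∩ μS)`:
`|L_U| = q^{k'+1} + q^{k'} - q^{j+1} + 1` (stated additively to avoid truncated
subtraction); if `j = k'` then `S` is an `F_q(μ)`-subspace, `L_U = L_W` with
`W = S × F_q(μ)`, and every point of `L_U` has weight `> 1`; `L_U` has a point of
weight one iff `j ≤ k' - 1`; and `|L_U| = q^{k'+1} + 1` iff `j = k' - 1`. -/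
theorem stmt6 (Fq Fqn : Type*) [Field Fq] [Field Fqn] [Algebra Fq Fqn] [Fintype Fq]
    (q n : ℕ) (hq : Fintype.card Fq = q) (hn : Module.finrank Fq Fqn = n)
    (k' : ℕ) (hk' : 2 ≤ k')
    (S : Submodule Fq Fqn) (hS : Module.finrank Fq ↥S = k')
    (μ : Fqn) (hμ : μ ∉ Set.range (algebraMap Fq Fqn))
    (T : Submodule Fq Fqn) (hT : T = pows Fq μ 2)
    (U : Submodule Fq (Fqn × Fqn)) (hU : U = S.prod T)
    (j : ℕ) (hj : j = Module.finrank Fq ↥(S ⊓ bmul Fq μ S)) :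
    Set.ncard (linSet U) + q ^ (j + 1) = q ^ (k' + 1) + q ^ k' + 1 ∧
    (j = k' →
      (∀ α ∈ Algebra.adjoin Fq {μ}, ∀ s ∈ S, α * s ∈ S) ∧
      linSet U = linSet (S.prod (Subalgebra.toSubmodule (Algebra.adjoin Fq {μ}))) ∧
      ∀ P ∈ linSet U, 1 < weight U P) ∧
    ((∃ P ∈ linSet U, weight U P = 1) ↔ j + 1 ≤ k') ∧
    (Set.ncard (linSet U) = q ^ (k' + 1) + 1 ↔ j + 1 = k') :=
  stmt6_general Fq Fqn q hq k' hk' S hS μ hμ T hT U hU j hj
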